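/- arXiv:2411.09964 — 4 statements merged into one kernel-verified Lean document; each statement's English description precedes it below -/
import Mathlib

section
/- Let n ≥ 1, let Ω_I be a nonempty compact subset of the open northern hemisphere S^n_+ = {x ∈ S^n : x_{n+1} > 0}, and let (Ω_O^k)_{k≥1} be a nonincreasing sequence of nonempty compact subsets of the closed southern hemisphere {x ∈ S^n : x_{n+1} ≤ 0} with Ω_O = ⋂_{k≥1} Ω_O^k nonempty. Let d : Ω_O^1 → (0,∞) be continuous, and define ρ_k(x) = inf_{y ∈ Ω_O^k} d(y)/(1 − x·y) and ρ(x) = inf_{y ∈ Ω_O} d(y)/(1 − x·y) for x ∈ Ω_I. Then the radial graphs R_{ρ_k} = {ρ_k(x)·x : x ∈ Ω_I} converge to R_ρ = {ρ(x)·x : x ∈ Ω_I} in the Hausdorff metric: d_H(R_{ρ_k}, R_ρ) → 0 as k → ∞. -/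
open scoped RealInnerProductSpace
open Set Filter Metric Topology

/-!
The function `(x, y) ↦ d y / (1 - x·y)` is continuous on the compact set `Ω_I × Ω_O^1`, since
the denominator vanishes only at `x = y`, which the hemisphere conditions exclude; hence it is
uniformly continuous there. The compact sets `Ω_O^k` eventually lie in every `δ`-neighbourhood
of `Ω_O`, so a minimiser of `ρ_k(x)` is `δ`-close to a point of `Ω_O`, and uniform continuity
gives `ρ(x) ≤ ρ_k(x) + ε` uniformly in `x`; the reverse inequality `ρ_k ≤ ρ` is monotonicity of
the infimum. Thus `ρ_k → ρ` uniformly on `Ω_I`, and since the points `x` are unit vectors the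
radial maps `x ↦ ρ_k(x) x` converge uniformly too, which bounds the Hausdorff distance.
-/

theorem eventually_subset_thickening_iInter {Y : Type*} [MetricSpace Y] {V : ℕ → Set Y}
    (hV : Antitone V) (hVc : ∀ k, IsCompact (V k)) {δ : ℝ} (hδ : 0 < δ) :
    ∀ᶠ k in atTop, V k ⊆ thickening δ (⋂ k, V k) := by
  obtain ⟨N, hN⟩ := exists_subset_nhds_of_isCompact hV.directed_ge hVc
    fun y hy => isOpen_thickening.mem_nhds (self_subset_thickening hδ _ hy)
  exact eventually_atTop.2 ⟨N, fun k hk => (hV hk).trans hN⟩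

theorem sInf_image_lt_sInf_image_add_of_subset_thickening {Y : Type*} [PseudoMetricSpace Y]
    {g : Y → ℝ} {A B : Set Y} {δ ε : ℝ} (hA : IsCompact A) (hg : ContinuousOn g A)
    (hB : B.Nonempty) (hBA : B ⊆ A) (hAB : A ⊆ thickening δ B)
    (hclose : ∀ y ∈ A, ∀ y' ∈ B, dist y' y < δ → g y' < g y + ε) :
    sInf (g '' B) < sInf (g '' A) + ε := by
  have hgA : IsCompact (g '' A) := hA.image_of_continuousOn hg
  obtain ⟨y, hyA, hymin⟩ := hgA.sInf_mem ((hB.mono hBA).image g)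
  obtain ⟨y', hy'B, hyy'⟩ := mem_thickening_iff.1 (hAB hyA)
  have hbdd : BddBelow (g '' B) := hgA.bddBelow.mono (image_mono hBA)
  calc sInf (g '' B) ≤ g y' := csInf_le hbdd (mem_image_of_mem g hy'B)
    _ < g y + ε := hclose y hyA y' hy'B (by rwa [dist_comm])
    _ = sInf (g '' A) + ε := by rw [hymin]

theorem tendstoUniformlyOn_sInf_image_iInter {X Y : Type*} [PseudoMetricSpace X] [MetricSpace Y]
    {s : Set X} {V : ℕ → Set Y} {f : X → Y → ℝ} (hs : IsCompact s) (hV : Antitone V)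
    (hVc : ∀ k, IsCompact (V k)) (hne : (⋂ k, V k).Nonempty)
    (hf : ContinuousOn (Function.uncurry f) (s ×ˢ V 0)) :
    TendstoUniformlyOn (fun k x => sInf (f x '' V k)) (fun x => sInf (f x '' ⋂ k, V k))
      atTop s := by
  rw [Metric.tendstoUniformlyOn_iff]
  intro ε hε
  obtain ⟨δ, hδ, hfδ⟩ :=
    Metric.uniformContinuousOn_iff.1 ((hs.prod (hVc 0)).uniformContinuousOn_of_continuous hf) ε hε
  filter_upwards [eventually_subset_thickening_iInter hV hVc hδ] with k hk x hx
  have hk0 : V k ⊆ V 0 := hV (Nat.zero_le k)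
  have hBk : (⋂ k, V k) ⊆ V k := iInter_subset _ k
  have hg : ContinuousOn (f x) (V k) :=
    hf.comp (continuousOn_const.prodMk continuousOn_id) fun y hy => ⟨hx, hk0 hy⟩
  have hle : sInf (f x '' V k) ≤ sInf (f x '' ⋂ k, V k) :=
    csInf_le_csInf ((hVc k).image_of_continuousOn hg).bddBelow (hne.image _) (image_mono hBk)
  have hlt : sInf (f x '' ⋂ k, V k) < sInf (f x '' V k) + ε := by
    refine sInf_image_lt_sInf_image_add_of_subset_thickening (hVc k) hg hne hBk hk ?_
    intro y hy y' hy' hyy'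
    have hdist : dist ((x, y') : X × Y) (x, y) < δ := by
      rw [Prod.dist_eq, dist_self]
      exact max_lt hδ hyy'
    have hfxy := hfδ (x, y') ⟨hx, hk0 (hBk hy')⟩ (x, y) ⟨hx, hk0 hy⟩ hdist
    exact lt_add_of_sub_left_lt (abs_sub_lt_iff.1 hfxy).1
  rw [Real.dist_eq, abs_sub_lt_iff]
  constructor <;> linarith

theorem TendstoUniformlyOn.smul_self_of_norm_eq_one {ι E : Type*}
    [SeminormedAddCommGroup E] [NormedSpace ℝ E] {F : ι → E → ℝ} {f : E → ℝ} {l : Filter ι}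
    {s : Set E} (h : TendstoUniformlyOn F f l s) (hs : ∀ x ∈ s, ‖x‖ = 1) :
    TendstoUniformlyOn (fun k x => F k x • x) (fun x => f x • x) l s := by
  rw [Metric.tendstoUniformlyOn_iff] at h ⊢
  intro ε hε
  filter_upwards [h ε hε] with k hk x hx
  rw [dist_eq_norm, ← sub_smul, norm_smul, hs x hx, mul_one, ← dist_eq_norm]
  exact hk x hx

theorem TendstoUniformlyOn.tendsto_hausdorffDist_image {α ι E : Type*} [PseudoMetricSpace E]
    {F : ι → α → E} {f : α → E} {l : Filter ι} {s : Set α} (h : TendstoUniformlyOn F f l s) :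
    Tendsto (fun k => hausdorffDist (F k '' s) (f '' s)) l (𝓝 0) := by
  rw [Metric.tendstoUniformlyOn_iff] at h
  rw [Metric.tendsto_nhds]
  intro ε hε
  filter_upwards [h (ε / 2) (half_pos hε)] with k hk
  have hle : hausdorffDist (F k '' s) (f '' s) ≤ ε / 2 := by
    refine hausdorffDist_le_of_mem_dist (half_pos hε).le ?_ ?_
    · rintro _ ⟨x, hx, rfl⟩
      exact ⟨f x, mem_image_of_mem f hx, by rw [dist_comm]; exact (hk x hx).le⟩
    · rintro _ ⟨x, hx, rfl⟩
      exact ⟨F k x, mem_image_of_mem (F k) hx, (hk x hx).le⟩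
  rw [Real.dist_eq, sub_zero, abs_of_nonneg hausdorffDist_nonneg]
  linarith

theorem stmt_3_general {n : ℕ}
    (ΩI : Set (EuclideanSpace ℝ (Fin (n + 1))))
    (hIc : IsCompact ΩI)
    (hI : ΩI ⊆ {x : EuclideanSpace ℝ (Fin (n + 1)) |
      x ∈ Metric.sphere (0 : EuclideanSpace ℝ (Fin (n + 1))) 1 ∧ 0 < x (Fin.last n)})
    (ΩOseq : ℕ → Set (EuclideanSpace ℝ (Fin (n + 1))))
    (hanti : Antitone ΩOseq)
    (hOc : ∀ k, IsCompact (ΩOseq k))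
    (hOsub : ∀ k, ΩOseq k ⊆ {x : EuclideanSpace ℝ (Fin (n + 1)) |
      x ∈ Metric.sphere (0 : EuclideanSpace ℝ (Fin (n + 1))) 1 ∧ x (Fin.last n) ≤ 0})
    (hInter : (⋂ k, ΩOseq k).Nonempty)
    (d : EuclideanSpace ℝ (Fin (n + 1)) → ℝ)
    (hdc : ContinuousOn d (ΩOseq 0))
    (ρk : ℕ → EuclideanSpace ℝ (Fin (n + 1)) → ℝ)
    (ρ : EuclideanSpace ℝ (Fin (n + 1)) → ℝ)
    (hρk : ∀ k, ∀ x ∈ ΩI, ρk k x = sInf ((fun y => d y / (1 - ⟪x, y⟫)) '' ΩOseq k))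
    (hρ : ∀ x ∈ ΩI, ρ x = sInf ((fun y => d y / (1 - ⟪x, y⟫)) '' (⋂ k, ΩOseq k))) :
    Filter.Tendsto
      (fun k => Metric.hausdorffDist
        ((fun x => ρk k x • x) '' ΩI) ((fun x => ρ x • x) '' ΩI))
      Filter.atTop (nhds 0) := by
  have hunit : ∀ x ∈ ΩI, ‖x‖ = 1 := fun x hx => by simpa using (hI hx).1
  have hden : ∀ x ∈ ΩI, ∀ y ∈ ΩOseq 0, 1 - ⟪x, y⟫ ≠ 0 := by
    intro x hx y hy
    have hxy : x ≠ y := fun h => (hI hx).2.not_ge (h ▸ (hOsub 0 hy).2)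
    have hy1 : ‖y‖ = 1 := by simpa using (hOsub 0 hy).1
    exact (sub_pos.2 ((inner_lt_one_iff_real_of_norm_eq_one (hunit x hx) hy1).2 hxy)).ne'
  have hf : ContinuousOn (Function.uncurry fun x y => d y / (1 - ⟪x, y⟫)) (ΩI ×ˢ ΩOseq 0) :=
    (hdc.comp continuousOn_snd fun p hp => hp.2).div
      (continuous_const.sub continuous_inner).continuousOn fun p hp => hden _ hp.1 _ hp.2
  have hρ_unif : TendstoUniformlyOn ρk ρ atTop ΩI :=
    ((tendstoUniformlyOn_sInf_image_iInter hIc hanti hOc hInter hf).congr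
      (Eventually.of_forall fun k x hx => (hρk k x hx).symm)).congr_right
      fun x hx => (hρ x hx).symm
  exact (hρ_unif.smul_self_of_norm_eq_one hunit).tendsto_hausdorffDist_image

/-- Hausdorff convergence of the radial graphs of
`ρ_k(x) = inf_{y ∈ Ω_O^k} d(y)/(1 - x·y)` to the radial graph of
`ρ(x) = inf_{y ∈ ⋂ₖ Ω_O^k} d(y)/(1 - x·y)` as the output domains shrink. -/
theorem stmt_3 {n : ℕ} (hn : 1 ≤ n)
    (ΩI : Set (EuclideanSpace ℝ (Fin (n + 1))))
    (hIne : ΩI.Nonempty) (hIc : IsCompact ΩI)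
    (hI : ΩI ⊆ {x : EuclideanSpace ℝ (Fin (n + 1)) |
      x ∈ Metric.sphere (0 : EuclideanSpace ℝ (Fin (n + 1))) 1 ∧ 0 < x (Fin.last n)})
    (ΩOseq : ℕ → Set (EuclideanSpace ℝ (Fin (n + 1))))
    (hanti : Antitone ΩOseq)
    (hOne : ∀ k, (ΩOseq k).Nonempty) (hOc : ∀ k, IsCompact (ΩOseq k))
    (hOsub : ∀ k, ΩOseq k ⊆ {x : EuclideanSpace ℝ (Fin (n + 1)) |
      x ∈ Metric.sphere (0 : EuclideanSpace ℝ (Fin (n + 1))) 1 ∧ x (Fin.last n) ≤ 0})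
    (hInter : (⋂ k, ΩOseq k).Nonempty)
    (d : EuclideanSpace ℝ (Fin (n + 1)) → ℝ)
    (hdc : ContinuousOn d (ΩOseq 0)) (hdpos : ∀ y ∈ ΩOseq 0, 0 < d y)
    (ρk : ℕ → EuclideanSpace ℝ (Fin (n + 1)) → ℝ)
    (ρ : EuclideanSpace ℝ (Fin (n + 1)) → ℝ)
    (hρk : ∀ k, ∀ x ∈ ΩI, ρk k x = sInf ((fun y => d y / (1 - ⟪x, y⟫)) '' ΩOseq k))
    (hρ : ∀ x ∈ ΩI, ρ x = sInf ((fun y => d y / (1 - ⟪x, y⟫)) '' (⋂ k, ΩOseq k))) :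
    Filter.Tendsto
      (fun k => Metric.hausdorffDist
        ((fun x => ρk k x • x) '' ΩI) ((fun x => ρ x • x) '' ΩI))
      Filter.atTop (nhds 0) :=
  stmt_3_general ΩI hIc hI ΩOseq hanti hOc hOsub hInter d hdc ρk ρ hρk hρ
end

section
/- Let Ω_I, Ω_O ⊆ S^n be nonempty with x·y < 1 for all x ∈ Ω_I, y ∈ Ω_O, and let ρ : Ω_I → (0,∞) be bounded above. Suppose that every x ∈ Ω_I admits a supporting paraboloid p_{y,d} of ρ at x with axis direction y ∈ Ω_O and focal parameter d > 0. Then the Legendre transform ρ*(y) = inf_{x ∈ Ω_I} 1/(ρ(x)(1 − x·y)) is strictly positive on Ω_O, and the double Legendre transform ρ**(x) := inf_{y ∈ Ω_O} 1/(ρ*(y)(1 − x·y)) satisfies ρ**(x) = ρ(x) for every x ∈ Ω_I. -/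
open scoped RealInnerProductSpace

/-- if every point of `Ω_I` admits a supporting paraboloid of `ρ` with axis
direction in `Ω_O`, then the Legendre transform `ρ*` is strictly positive on `Ω_O` and
the double Legendre transform `ρ**` coincides with `ρ` on `Ω_I`. -/
theorem stmt_7 {n : ℕ} (ΩI ΩO : Set (EuclideanSpace ℝ (Fin (n + 1))))
    (hIne : ΩI.Nonempty) (hOne : ΩO.Nonempty)
    (hI : ΩI ⊆ Metric.sphere (0 : EuclideanSpace ℝ (Fin (n + 1))) 1)
    (hO : ΩO ⊆ Metric.sphere (0 : EuclideanSpace ℝ (Fin (n + 1))) 1)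
    (hlt : ∀ x ∈ ΩI, ∀ y ∈ ΩO, ⟪x, y⟫ < 1)
    (ρ : EuclideanSpace ℝ (Fin (n + 1)) → ℝ) (hρpos : ∀ x ∈ ΩI, 0 < ρ x)
    (C : ℝ) (hρbd : ∀ x ∈ ΩI, ρ x ≤ C)
    (hsupp : ∀ x ∈ ΩI, ∃ y ∈ ΩO, ∃ d : ℝ, 0 < d ∧
      ρ x = d / (1 - ⟪x, y⟫) ∧ ∀ x' ∈ ΩI, ρ x' ≤ d / (1 - ⟪x', y⟫))
    (ρstar ρstarstar : EuclideanSpace ℝ (Fin (n + 1)) → ℝ)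
    (hρstar : ∀ y ∈ ΩO, ρstar y = sInf ((fun x => 1 / (ρ x * (1 - ⟪x, y⟫))) '' ΩI))
    (hρss : ∀ x ∈ ΩI,
      ρstarstar x = sInf ((fun y => 1 / (ρstar y * (1 - ⟪x, y⟫))) '' ΩO)) :
    (∀ y ∈ ΩO, 0 < ρstar y) ∧ ∀ x ∈ ΩI, ρstarstar x = ρ x := by
  obtain ⟨x0, hx0⟩ := id hIne
  have hCpos : 0 < C := lt_of_lt_of_le (hρpos x0 hx0) (hρbd x0 hx0)
  -- basic facts
  have hsub : ∀ x ∈ ΩI, ∀ y ∈ ΩO, 0 < 1 - ⟪x, y⟫ := fun x hx y hy =>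
    sub_pos.mpr (hlt x hx y hy)
  have hsub2 : ∀ x ∈ ΩI, ∀ y ∈ ΩO, 1 - ⟪x, y⟫ ≤ 2 := by
    intro x hx y hy
    have hxn : ‖x‖ = 1 := by simpa using mem_sphere_zero_iff_norm.mp (hI hx)
    have hyn : ‖y‖ = 1 := by simpa using mem_sphere_zero_iff_norm.mp (hO hy)
    have := abs_real_inner_le_norm x y
    rw [hxn, hyn] at this
    have : -1 ≤ ⟪x, y⟫ := by
      have := neg_abs_le ⟪x, y⟫
      nlinarith [abs_real_inner_le_norm x y]
    linarith
  -- lower bound 1/(2C) for ρ*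
  have hstar_lb : ∀ y ∈ ΩO, 1 / (2 * C) ≤ ρstar y := by
    intro y hy
    rw [hρstar y hy]
    apply le_csInf (Set.Nonempty.image _ hIne)
    rintro b ⟨x, hx, rfl⟩
    have h1 : 0 < ρ x * (1 - ⟪x, y⟫) := mul_pos (hρpos x hx) (hsub x hx y hy)
    have h2 : ρ x * (1 - ⟪x, y⟫) ≤ 2 * C := by
      have := hsub2 x hx y hy
      nlinarith [hρpos x hx, hρbd x hx]
    exact one_div_le_one_div_of_le h1 h2
  have hstarpos : ∀ y ∈ ΩO, 0 < ρstar y := fun y hy =>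
    lt_of_lt_of_le (by positivity) (hstar_lb y hy)
  refine ⟨hstarpos, ?_⟩
  intro x hx
  -- ρ*(y) ≤ 1/(ρ x (1 - x·y)) for each y
  have hstar_ub : ∀ y ∈ ΩO, ρstar y ≤ 1 / (ρ x * (1 - ⟪x, y⟫)) := by
    intro y hy
    rw [hρstar y hy]
    apply csInf_le
    · refine ⟨0, ?_⟩
      rintro b ⟨x', hx', rfl⟩
      have : 0 < ρ x' * (1 - ⟪x', y⟫) := mul_pos (hρpos x' hx') (hsub x' hx' y hy)
      positivity
    · exact ⟨x, hx, rfl⟩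
  rw [hρss x hx]
  apply le_antisymm
  · -- upper: use supporting paraboloid
    obtain ⟨y, hy, d, hd, hxe, hsp⟩ := hsupp x hx
    have hs := hsub x hx y hy
    have hxd : ρ x * (1 - ⟪x, y⟫) = d := by
      rw [hxe, div_mul_cancel₀ _ hs.ne']
    have h1 : ρstar y ≤ 1 / d := by
      have := hstar_ub y hy
      rwa [hxd] at this
    have h2 : 1 / d ≤ ρstar y := by
      rw [hρstar y hy]
      apply le_csInf (Set.Nonempty.image _ hIne)
      rintro b ⟨x', hx', rfl⟩
      have hs' := hsub x' hx' y hy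
      have hle : ρ x' * (1 - ⟪x', y⟫) ≤ d := by
        have := hsp x' hx'
        rw [div_eq_mul_inv] at this
        calc ρ x' * (1 - ⟪x', y⟫) ≤ d * (1 - ⟪x', y⟫)⁻¹ * (1 - ⟪x', y⟫) :=
              mul_le_mul_of_nonneg_right this hs'.le
          _ = d := by rw [mul_assoc, inv_mul_cancel₀ hs'.ne', mul_one]
      exact one_div_le_one_div_of_le (mul_pos (hρpos x' hx') hs') hle
    have hstary : ρstar y = 1 / d := le_antisymm h1 h2
    have : (1 : ℝ) / (ρstar y * (1 - ⟪x, y⟫)) = ρ x := by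
      rw [hstary, hxe, one_div, mul_inv, one_div, inv_inv, ← div_eq_mul_inv]
    calc sInf ((fun y => 1 / (ρstar y * (1 - ⟪x, y⟫))) '' ΩO)
        ≤ 1 / (ρstar y * (1 - ⟪x, y⟫)) := by
          apply csInf_le
          · refine ⟨0, ?_⟩
            rintro b ⟨y', hy', rfl⟩
            have := mul_pos (hstarpos y' hy') (hsub x hx y' hy')
            positivity
          · exact ⟨y, hy, rfl⟩
      _ = ρ x := this
  · -- lower: ρ x ≤ each term
    apply le_csInf (Set.Nonempty.image _ hOne)
    rintro b ⟨y, hy, rfl⟩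
    have hs := hsub x hx y hy
    have hρx := hρpos x hx
    have h1 : ρstar y * (1 - ⟪x, y⟫) ≤ 1 / ρ x := by
      have := hstar_ub y hy
      have h2 : ρstar y * (1 - ⟪x, y⟫) ≤ (1 / (ρ x * (1 - ⟪x, y⟫))) * (1 - ⟪x, y⟫) :=
        mul_le_mul_of_nonneg_right this hs.le
      calc ρstar y * (1 - ⟪x, y⟫) ≤ (1 / (ρ x * (1 - ⟪x, y⟫))) * (1 - ⟪x, y⟫) := h2
        _ = 1 / ρ x := by
            rw [one_div, one_div, mul_inv, mul_assoc, inv_mul_cancel₀ hs.ne', mul_one]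
    have hpos : 0 < ρstar y * (1 - ⟪x, y⟫) := mul_pos (hstarpos y hy) hs
    have := one_div_le_one_div_of_le hpos h1
    rwa [one_div_one_div] at this
end

section
/- Let n ≥ 1 and p ≥ 1. Let Ω ⊂ ℝ^n be a nonempty compact set, μ_t a finite Borel measure on Ω of total mass M, and z₁, …, z_K ∈ Ω points with Euclidean covering radius l = sup_{z ∈ Ω} min_i |z − z_i|. Let F : Ω → {z₁,…,z_K} be a Borel nearest-point map (so |z − F(z)| ≤ l for all z), and set μ_t^K = F♯μ_t. Let Ω_O ⊆ S^n and let Q : Ω_O → Ω be a homeomorphism whose inverse Q⁻¹ : Ω → Ω_O is Lipschitz with constant C₁ (from the Euclidean distance on Ω ⊂ ℝ^n to the Euclidean distance on Ω_O ⊂ ℝ^{n+1}), and assume C₁·l ≤ 2. Define μ_O = (Q⁻¹)♯μ_t and μ_O^K = (Q⁻¹)♯μ_t^K, measures on Ω_O. Then, with respect to the geodesic distance d_{S^n}(x,y) = arccos(x·y) on S^n, W_p(μ_O, μ_O^K) ≤ M^{1/p} p^{−1/p} arccos(1 − (C₁ l)²/2). -/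
open MeasureTheory
open scoped ENNReal RealInnerProductSpace

/-- The optimal transport cost between two measures, for a cost `c`, as the infimum of
`∫ c dγ` over all couplings `γ` of the two measures. -/
noncomputable def OTCost {X : Type*} [MeasurableSpace X]
    (c : X → X → ℝ≥0∞) (μ ν : Measure X) : ℝ≥0∞ :=
  ⨅ γ ∈ {γ : Measure (X × X) | γ.map Prod.fst = μ ∧ γ.map Prod.snd = ν},
    ∫⁻ q, c q.1 q.2 ∂γ

/-- Wasserstein distance of order `p` with cost `(1/p) d(x,y)^p`. -/
noncomputable def Wp {X : Type*} [MeasurableSpace X] (d : X → X → ℝ) (p : ℝ)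
    (μ ν : Measure X) : ℝ≥0∞ :=
  OTCost (fun x y => ENNReal.ofReal (1 / p * d x y ^ p)) μ ν ^ (1 / p)

/-- bound on the Wasserstein distance (for the geodesic sphere distance
`arccos(x·y)`) between `μ_O = (Q⁻¹)♯μ_t` and `μ_O^K = (Q⁻¹)♯(F♯μ_t)`, where `F` is a
Borel nearest-point map onto points of covering radius `l` and `Q⁻¹` is `C₁`-Lipschitz. -/
theorem stmt_10 {n : ℕ} (hn : 1 ≤ n) (p : ℝ) (hp : 1 ≤ p)
    (Ω : Set (EuclideanSpace ℝ (Fin n))) (hΩne : Ω.Nonempty) (hΩc : IsCompact Ω)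
    (μt : Measure (EuclideanSpace ℝ (Fin n)))
    (M : ℝ) (hM : 0 ≤ M) (hmass : μt Set.univ = ENNReal.ofReal M)
    (hsuppμt : μt Ωᶜ = 0)
    (K : ℕ) (zs : Fin K → EuclideanSpace ℝ (Fin n)) (hzs : ∀ i, zs i ∈ Ω)
    (l : ℝ) (hl0 : 0 ≤ l)
    (F : EuclideanSpace ℝ (Fin n) → EuclideanSpace ℝ (Fin n))
    (hFmeas : Measurable F)
    (hFrange : ∀ z ∈ Ω, F z ∈ Set.range zs)
    (hFnear : ∀ z ∈ Ω, dist z (F z) = ⨅ i, dist z (zs i))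
    (hFl : ∀ z ∈ Ω, dist z (F z) ≤ l)
    (ΩO : Set (EuclideanSpace ℝ (Fin (n + 1))))
    (hΩO : ΩO ⊆ Metric.sphere (0 : EuclideanSpace ℝ (Fin (n + 1))) 1)
    (Q : EuclideanSpace ℝ (Fin (n + 1)) → EuclideanSpace ℝ (Fin n))
    (Qinv : EuclideanSpace ℝ (Fin n) → EuclideanSpace ℝ (Fin (n + 1)))
    (hQmaps : Set.MapsTo Q ΩO Ω) (hQinvmaps : Set.MapsTo Qinv Ω ΩO)
    (hQc : ContinuousOn Q ΩO) (hQinvc : ContinuousOn Qinv Ω)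
    (hQleft : ∀ y ∈ ΩO, Qinv (Q y) = y) (hQright : ∀ z ∈ Ω, Q (Qinv z) = z)
    (hQinvmeas : Measurable Qinv)
    (C₁ : ℝ) (hC₁ : 0 ≤ C₁)
    (hQinvLip : ∀ z ∈ Ω, ∀ z' ∈ Ω, dist (Qinv z) (Qinv z') ≤ C₁ * dist z z')
    (hCl : C₁ * l ≤ 2) :
    Wp (fun x y => Real.arccos ⟪x, y⟫) p (μt.map Qinv) ((μt.map F).map Qinv)
      ≤ ENNReal.ofReal (M ^ (1 / p) * p ^ (-(1 / p)) *
          Real.arccos (1 - (C₁ * l) ^ 2 / 2)) := by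

  have hp0 : 0 < p := lt_of_lt_of_le one_pos hp
  set A := Real.arccos (1 - (C₁ * l) ^ 2 / 2) with hAdef
  have hA0 : 0 ≤ A := Real.arccos_nonneg _
  have hpair : Measurable (fun z => (Qinv z, Qinv (F z))) :=
    hQinvmeas.prodMk (hQinvmeas.comp hFmeas)
  set γ : Measure (EuclideanSpace ℝ (Fin (n+1)) × EuclideanSpace ℝ (Fin (n+1))) :=
    μt.map (fun z => (Qinv z, Qinv (F z))) with hγ
  have h1 : γ.map Prod.fst = μt.map Qinv := by
    rw [hγ, Measure.map_map measurable_fst hpair]; rfl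
  have h2 : γ.map Prod.snd = (μt.map F).map Qinv := by
    rw [hγ, Measure.map_map measurable_snd hpair, Measure.map_map hQinvmeas hFmeas]; rfl
  have hcmeas : Measurable (fun q : EuclideanSpace ℝ (Fin (n+1)) × EuclideanSpace ℝ (Fin (n+1)) =>
      ENNReal.ofReal (1 / p * Real.arccos ⟪q.1, q.2⟫ ^ p)) := by
    have hc : Continuous (fun q : EuclideanSpace ℝ (Fin (n+1)) × EuclideanSpace ℝ (Fin (n+1)) =>
        1 / p * Real.arccos ⟪q.1, q.2⟫ ^ p) :=
      continuous_const.mul ((Real.continuous_rpow_const hp0.le).comp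
        (Real.continuous_arccos.comp continuous_inner))
    exact ENNReal.measurable_ofReal.comp hc.measurable
  -- OTCost bounded by integral over γ
  have hOT : OTCost (fun x y => ENNReal.ofReal (1 / p * Real.arccos ⟪x, y⟫ ^ p))
      (μt.map Qinv) ((μt.map F).map Qinv) ≤ ∫⁻ q, ENNReal.ofReal (1 / p * Real.arccos ⟪q.1, q.2⟫ ^ p) ∂γ := by
    exact iInf₂_le γ ⟨h1, h2⟩
  have hint : ∫⁻ q, ENNReal.ofReal (1 / p * Real.arccos ⟪q.1, q.2⟫ ^ p) ∂γ
      = ∫⁻ z, ENNReal.ofReal (1 / p * Real.arccos ⟪Qinv z, Qinv (F z)⟫ ^ p) ∂μt := by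
    rw [hγ, lintegral_map hcmeas hpair]
  have haeΩ : ∀ᵐ z ∂μt, z ∈ Ω := by
    rw [Filter.eventually_iff, mem_ae_iff]; simpa using hsuppμt
  have hptwise : ∀ z ∈ Ω,
      ENNReal.ofReal (1 / p * Real.arccos ⟪Qinv z, Qinv (F z)⟫ ^ p)
        ≤ ENNReal.ofReal (1 / p * A ^ p) := by
    intro z hz
    have hFz : F z ∈ Ω := by
      obtain ⟨i, hi⟩ := hFrange z hz
      rw [← hi]; exact hzs i
    set x := Qinv z
    set y := Qinv (F z)
    have hx : ‖x‖ = 1 := by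
      have := hΩO (hQinvmaps hz); rwa [mem_sphere_zero_iff_norm] at this
    have hy : ‖y‖ = 1 := by
      have := hΩO (hQinvmaps hFz); rwa [mem_sphere_zero_iff_norm] at this
    have hd : dist x y ≤ C₁ * l := by
      calc dist x y ≤ C₁ * dist z (F z) := hQinvLip z hz (F z) hFz
        _ ≤ C₁ * l := by
          exact mul_le_mul_of_nonneg_left (hFl z hz) hC₁
    have hd0 : 0 ≤ dist x y := dist_nonneg
    have hinner : ⟪x, y⟫ = 1 - dist x y ^ 2 / 2 := by
      have hns : ‖x - y‖ ^ 2 = ‖x‖ ^ 2 - 2 * ⟪x, y⟫ + ‖y‖ ^ 2 := norm_sub_sq_real x y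
      rw [dist_eq_norm]
      rw [hx, hy] at hns
      nlinarith [hns]
    have hge : 1 - (C₁ * l) ^ 2 / 2 ≤ ⟪x, y⟫ := by
      rw [hinner]; nlinarith
    have hlb : -1 ≤ 1 - (C₁ * l) ^ 2 / 2 := by nlinarith [mul_nonneg hC₁ hl0]
    have harc : Real.arccos ⟪x, y⟫ ≤ A := by
      rw [hAdef, Real.arccos, Real.arccos]
      have := Real.monotone_arcsin hge
      linarith
    apply ENNReal.ofReal_le_ofReal
    apply mul_le_mul_of_nonneg_left _ (by positivity : (0:ℝ) ≤ 1 / p)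
    exact Real.rpow_le_rpow (Real.arccos_nonneg _) harc hp0.le
  have hbound : ∫⁻ z, ENNReal.ofReal (1 / p * Real.arccos ⟪Qinv z, Qinv (F z)⟫ ^ p) ∂μt
      ≤ ENNReal.ofReal (1 / p * A ^ p) * ENNReal.ofReal M := by
    calc ∫⁻ z, ENNReal.ofReal (1 / p * Real.arccos ⟪Qinv z, Qinv (F z)⟫ ^ p) ∂μt
        ≤ ∫⁻ _, ENNReal.ofReal (1 / p * A ^ p) ∂μt := by
          refine lintegral_mono_ae ?_
          filter_upwards [haeΩ] with z hz using hptwise z hz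
      _ = ENNReal.ofReal (1 / p * A ^ p) * ENNReal.ofReal M := by
          rw [lintegral_const, hmass]
  have hWp : Wp (fun x y => Real.arccos ⟪x, y⟫) p (μt.map Qinv) ((μt.map F).map Qinv)
      ≤ (ENNReal.ofReal (1 / p * A ^ p) * ENNReal.ofReal M) ^ (1 / p) := by
    unfold Wp
    exact ENNReal.rpow_le_rpow (le_trans (le_trans hOT (le_of_eq hint)) hbound) (by positivity)
  refine le_trans hWp (le_of_eq ?_)
  rw [← ENNReal.ofReal_mul (by positivity)]
  rw [ENNReal.ofReal_rpow_of_nonneg (by positivity) (by positivity)]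
  congr 1
  rw [Real.mul_rpow (by positivity) hM, Real.mul_rpow (by positivity) (by positivity)]
  rw [← Real.rpow_mul hA0, mul_one_div_cancel hp0.ne', Real.rpow_one]
  have h1p : (1 / p) ^ (1 / p) = p ^ (-(1 / p)) := by
    rw [one_div p, Real.inv_rpow hp0.le, ← Real.rpow_neg hp0.le]
  rw [h1p]
  ring
end

section
/- Let n ≥ 1 and p ≥ 1. Let Ω_I, Ω_O ⊆ S^n be nonempty compact sets, each equipped with the geodesic distance d_{S^n}(x,y) = arccos(x·y). Let μ_I be a finite Borel measure on Ω_I of total mass M; let x₁, …, x_N ∈ Ω_I have Euclidean covering radius r = sup_{x ∈ Ω_I} min_j |x − x_j| with r ≤ 2, and let μ_I^N be the pushforward of μ_I under a Borel nearest-point map onto {x₁,…,x_N}. Let Ω ⊂ ℝ^n be a nonempty compact set, μ_t a finite Borel measure on Ω of total mass M; let z₁, …, z_K ∈ Ω have covering radius l = sup_{z ∈ Ω} min_i |z − z_i|, and let μ_t^K be the pushforward of μ_t under a Borel nearest-point map onto {z₁,…,z_K}. Let Q : Ω_O → Ω be a homeomorphism that is Lipschitz with constant L_Q (from d_{S^n}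 to the Euclidean distance on ℝ^n) and whose inverse Q⁻¹ is Lipschitz with constant C₁ (from the Euclidean distance on Ω to the Euclidean distance on ℝ^{n+1}), and assume C₁·l ≤ 2; set μ_O = (Q⁻¹)♯μ_t and μ_O^K = (Q⁻¹)♯μ_t^K. Let T̃ : Ω_I → Ω_O be a Borel map that is Lipschitz with constant L_T with respect to the geodesic distances, and suppose W_p(T̃♯μ_I^N, μ_O^K) ≤ δ (Wasserstein with respect to d_{S^n} on Ω_O). Then W_p((Q ∘ T̃)♯μ_I, μ_t) ≤ L_Q · ( L_T · M^{1/p} p^{−1/p} arccos(1 − r²/2) + δ + M^{1/p} p^{−1/p} arccos(1 − (C₁ l)²/2) ), where the left-hand Wasserstein distance is with respect to the Euclidean distance on ℝ^n. -/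
open MeasureTheory
open scoped ENNReal RealInnerProductSpace

open ProbabilityTheory

/-!
The estimate is the triangle inequality for `W_p` along the chain
`T̃♯μ_I, T̃♯μ_I^N, μ_O^K, μ_O`, pushed to `Ω` by the `L_Q`-Lipschitz map `Q` (which sends `μ_O` back
to `μ_t`). The first link is at most `L_T W_p(μ_I, μ_I^N)`, and both `μ_I` with `μ_I^N` and
`μ_O^K` with `μ_O` are coupled through the discretization maps themselves, which move points by a
chord of length at most `r`, resp. `C₁ l`; on the unit sphere a chord of length `s` has geodesic
length `arccos (1 - s² / 2)`. The triangle inequality for `W_p` comes from gluing two couplings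
along their common marginal (by disintegration) and Minkowski's inequality.
-/

def IsCoupling {X Y : Type*} [MeasurableSpace X] [MeasurableSpace Y]
    (γ : Measure (X × Y)) (μ : Measure X) (ν : Measure Y) : Prop :=
  γ.map Prod.fst = μ ∧ γ.map Prod.snd = ν

theorem ae_mem_map_of_mapsTo {X Y : Type*} [MeasurableSpace X] [MeasurableSpace Y]
    {μ : Measure X} {f : X → Y} (hf : Measurable f) {s : Set X} {t : Set Y}
    (ht : MeasurableSet t) (hs : ∀ᵐ x ∂μ, x ∈ s) (hst : Set.MapsTo f s t) :
    ∀ᵐ y ∂μ.map f, y ∈ t :=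
  (ae_map_iff hf.aemeasurable ht).2 (hs.mono hst)

theorem map_map_eq_self_of_ae_leftInverse {X Y : Type*} [MeasurableSpace X] [MeasurableSpace Y]
    {μ : Measure X} {f : X → Y} {g : Y → X} (hf : Measurable f) (hg : Measurable g)
    (h : ∀ᵐ x ∂μ, g (f x) = x) : (μ.map f).map g = μ := by
  rw [Measure.map_map hg hf]
  exact (Measure.map_congr h).trans Measure.map_id

section Coupling

variable {X Y : Type*} [MeasurableSpace X] [MeasurableSpace Y] {μ : Measure X} {ν : Measure Y}
  {γ : Measure (X × Y)}

theorem IsCoupling.ae_fst (hγ : IsCoupling γ μ ν) {S : Set X} (hS : ∀ᵐ x ∂μ, x ∈ S) :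
    ∀ᵐ q ∂γ, q.1 ∈ S :=
  ae_of_ae_map measurable_fst.aemeasurable (hγ.1 ▸ hS)

theorem IsCoupling.ae_snd (hγ : IsCoupling γ μ ν) {S : Set Y} (hS : ∀ᵐ y ∂ν, y ∈ S) :
    ∀ᵐ q ∂γ, q.2 ∈ S :=
  ae_of_ae_map measurable_snd.aemeasurable (hγ.2 ▸ hS)

theorem IsCoupling.isFiniteMeasure_of_fst (hγ : IsCoupling γ μ ν) [IsFiniteMeasure μ] :
    IsFiniteMeasure γ :=
  ⟨by simpa [← hγ.1, Measure.map_apply measurable_fst MeasurableSet.univ] using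
    measure_lt_top μ Set.univ⟩

theorem IsCoupling.isFiniteMeasure_of_snd (hγ : IsCoupling γ μ ν) [IsFiniteMeasure ν] :
    IsFiniteMeasure γ :=
  ⟨by simpa [← hγ.2, Measure.map_apply measurable_snd MeasurableSet.univ] using
    measure_lt_top ν Set.univ⟩

theorem IsCoupling.map {X' Y' : Type*} [MeasurableSpace X'] [MeasurableSpace Y']
    (hγ : IsCoupling γ μ ν) {f : X → X'} {g : Y → Y'} (hf : Measurable f) (hg : Measurable g) :
    IsCoupling (γ.map (Prod.map f g)) (μ.map f) (ν.map g) := by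
  constructor
  · rw [Measure.map_map measurable_fst (hf.prodMap hg), ← hγ.1, Measure.map_map hf measurable_fst]
    rfl
  · rw [Measure.map_map measurable_snd (hf.prodMap hg), ← hγ.2, Measure.map_map hg measurable_snd]
    rfl

theorem isCoupling_map_prodMk {Z : Type*} [MeasurableSpace Z] {μ : Measure Z} {f : Z → X}
    {g : Z → Y} (hf : Measurable f) (hg : Measurable g) :
    IsCoupling (μ.map fun z => (f z, g z)) (μ.map f) (μ.map g) :=
  ⟨Measure.map_map measurable_fst (hf.prodMk hg), Measure.map_map measurable_snd (hf.prodMk hg)⟩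

theorem exists_isCoupling [IsFiniteMeasure μ] (h : μ Set.univ = ν Set.univ) :
    ∃ γ : Measure (X × Y), IsCoupling γ μ ν := by
  have : IsFiniteMeasure ν := ⟨h ▸ measure_lt_top μ _⟩
  rcases eq_zero_or_neZero μ with rfl | hμ
  · obtain rfl : ν = 0 := by simpa using h.symm
    exact ⟨0, by simp, by simp⟩
  have hμ0 : μ Set.univ ≠ 0 := by simpa using hμ.out
  refine ⟨(μ Set.univ)⁻¹ • μ.prod ν, ?_, ?_⟩
  · rw [Measure.map_smul, Measure.map_fst_prod, smul_smul, ← h,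
      ENNReal.inv_mul_cancel hμ0 (measure_ne_top _ _), one_smul]
  · rw [Measure.map_smul, Measure.map_snd_prod, smul_smul,
      ENNReal.inv_mul_cancel hμ0 (measure_ne_top _ _), one_smul]

theorem exists_gluing {Z : Type*} [MeasurableSpace Z] [StandardBorelSpace Z] [Nonempty Z]
    (γ₁ : Measure (X × Y)) (γ₂ : Measure (Y × Z)) [SFinite γ₁] [IsFiniteMeasure γ₂]
    (h : γ₁.map Prod.snd = γ₂.map Prod.fst) :
    ∃ ρ : Measure ((X × Y) × Z), ρ.map Prod.fst = γ₁ ∧ ρ.map (fun q => (q.1.2, q.2)) = γ₂ := by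
  refine ⟨γ₁ ⊗ₘ Kernel.prodMkLeft X γ₂.condKernel, Measure.fst_compProd _ _, ?_⟩
  have hg : Measurable fun q : (X × Y) × Z => (q.1.2, q.2) :=
    (measurable_snd.comp measurable_fst).prodMk measurable_snd
  ext s hs
  rw [Measure.map_apply hg hs, Measure.compProd_apply (hg hs)]
  simp only [Kernel.prodMkLeft_apply]
  change ∫⁻ a, (fun y => γ₂.condKernel y (Prod.mk y ⁻¹' s)) a.2 ∂γ₁ = _
  rw [← lintegral_map (Kernel.measurable_kernel_prodMk_left hs) measurable_snd, h,
    ← Measure.compProd_apply hs]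
  exact congrArg (· s) (γ₂.disintegrate γ₂.condKernel)

end Coupling

section Wasserstein

variable {X : Type*} [MeasurableSpace X] {d : X → X → ℝ} {p : ℝ} {μ ν : Measure X}

theorem ofReal_one_div_mul_rpow {p t : ℝ} (hp : 0 < p) (ht : 0 ≤ t) :
    ENNReal.ofReal (1 / p * t ^ p) = ‖p ^ (-(1 / p)) * t‖ₑ ^ p := by
  rw [Real.enorm_of_nonneg (by positivity), ENNReal.ofReal_rpow_of_nonneg (by positivity) hp.le,
    Real.mul_rpow (by positivity) ht, ← Real.rpow_mul hp.le, neg_mul, one_div_mul_cancel hp.ne',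
    Real.rpow_neg_one, one_div]

theorem Wp_eq_iInf_eLpNorm (hp : 0 < p) (hd : ∀ x y, 0 ≤ d x y) :
    Wp d p μ ν = ⨅ γ : {γ : Measure (X × X) // IsCoupling γ μ ν},
      eLpNorm (fun q => p ^ (-(1 / p)) * d q.1 q.2) (ENNReal.ofReal p) γ.1 := by
  rw [Wp, OTCost, iInf_subtype']
  refine ((ENNReal.orderIsoRpow (1 / p) (by positivity)).map_iInf _).trans
    (iInf_congr fun γ => ?_)
  rw [eLpNorm_eq_lintegral_rpow_enorm_toReal (by simpa using hp) ENNReal.ofReal_ne_top,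
    ENNReal.toReal_ofReal hp.le]
  simp only [ENNReal.orderIsoRpow_apply, ofReal_one_div_mul_rpow hp (hd _ _)]

theorem Wp_le_of_isCoupling (hp : 0 < p) (hd : ∀ x y, 0 ≤ d x y) {γ : Measure (X × X)}
    (hγ : IsCoupling γ μ ν) :
    Wp d p μ ν ≤ eLpNorm (fun q => p ^ (-(1 / p)) * d q.1 q.2) (ENNReal.ofReal p) γ :=
  (Wp_eq_iInf_eLpNorm hp hd).trans_le (iInf_le_of_le ⟨γ, hγ⟩ le_rfl)

theorem Wp_map_le_of_lipschitzOn {Y : Type*} [MeasurableSpace Y] {e : Y → Y → ℝ}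
    (hp : 0 < p) (hd : ∀ x y, 0 ≤ d x y) (he : ∀ x y, 0 ≤ e x y)
    (he_meas : Measurable (Function.uncurry e)) {S : Set X} {f : X → Y}
    (hf : Measurable f) {L : ℝ} (hfS : ∀ x ∈ S, ∀ y ∈ S, e (f x) (f y) ≤ L * d x y)
    [IsFiniteMeasure μ] (hμν : μ Set.univ = ν Set.univ)
    (hμS : ∀ᵐ x ∂μ, x ∈ S) (hνS : ∀ᵐ x ∂ν, x ∈ S) :
    Wp e p (μ.map f) (ν.map f) ≤ ENNReal.ofReal L * Wp d p μ ν := by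
  obtain ⟨γ₀, hγ₀⟩ := exists_isCoupling hμν
  have : Nonempty {γ : Measure (X × X) // IsCoupling γ μ ν} := ⟨⟨γ₀, hγ₀⟩⟩
  rw [Wp_eq_iInf_eLpNorm hp hd, ENNReal.mul_iInf (by simp)]
  refine le_iInf fun ⟨γ, hγ⟩ => (Wp_le_of_isCoupling hp he (hγ.map hf hf)).trans ?_
  have hcost : AEStronglyMeasurable (fun q : Y × Y => p ^ (-(1 / p)) * e q.1 q.2)
      (γ.map (Prod.map f f)) :=
    (measurable_const.mul he_meas).aestronglyMeasurable
  rw [eLpNorm_map_measure hcost (hf.prodMap hf).aemeasurable]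
  refine eLpNorm_le_mul_eLpNorm_of_ae_le_mul ?_ _
  filter_upwards [hγ.ae_fst hμS, hγ.ae_snd hνS] with q hq₁ hq₂
  have hc : 0 ≤ p ^ (-(1 / p)) := by positivity
  simp only [Function.comp_apply, Prod.map_fst, Prod.map_snd, Real.norm_eq_abs,
    abs_of_nonneg (mul_nonneg hc (he _ _)), abs_of_nonneg (mul_nonneg hc (hd _ _))]
  nlinarith [hfS _ hq₁ _ hq₂]

theorem Wp_map_le_of_ae_le {Z : Type*} [MeasurableSpace Z] {μ : Measure Z}
    (hp : 0 < p) (hd : ∀ x y, 0 ≤ d x y) (hd_meas : Measurable (Function.uncurry d))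
    {f g : Z → X} (hf : Measurable f) (hg : Measurable g) {c : ℝ}
    (hfg : ∀ᵐ z ∂μ, d (f z) (g z) ≤ c) {M : ℝ} (hM : 0 ≤ M)
    (hμ : μ Set.univ = ENNReal.ofReal M) :
    Wp d p (μ.map f) (μ.map g) ≤ ENNReal.ofReal (M ^ (1 / p) * p ^ (-(1 / p)) * c) := by
  have hc : 0 ≤ p ^ (-(1 / p)) := by positivity
  have hcost : AEStronglyMeasurable (fun q : X × X => p ^ (-(1 / p)) * d q.1 q.2)
      (μ.map fun z => (f z, g z)) :=
    (measurable_const.mul hd_meas).aestronglyMeasurable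
  refine (Wp_le_of_isCoupling hp hd (isCoupling_map_prodMk hf hg)).trans ?_
  rw [eLpNorm_map_measure hcost (hf.prodMk hg).aemeasurable]
  have hbound : ∀ᵐ z ∂μ, ‖((fun q : X × X => p ^ (-(1 / p)) * d q.1 q.2) ∘
      fun z => (f z, g z)) z‖ ≤ p ^ (-(1 / p)) * c := by
    filter_upwards [hfg] with z hz
    simp only [Function.comp_apply, Real.norm_eq_abs, abs_of_nonneg (mul_nonneg hc (hd _ _))]
    exact mul_le_mul_of_nonneg_left hz hc
  refine (eLpNorm_le_of_ae_bound hbound).trans (le_of_eq ?_)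
  rw [hμ, ENNReal.toReal_ofReal hp.le, ENNReal.ofReal_rpow_of_nonneg hM (by positivity),
    ← ENNReal.ofReal_mul (by positivity), mul_assoc, one_div]

theorem Wp_le_add [StandardBorelSpace X] [Nonempty X] (hp : 1 ≤ p)
    (hd : ∀ x y, 0 ≤ d x y) (hd_meas : Measurable (Function.uncurry d)) {S : Set X}
    (htri : ∀ x ∈ S, ∀ y ∈ S, ∀ z ∈ S, d x z ≤ d x y + d y z)
    {μ₁ μ₂ μ₃ : Measure X} [IsFiniteMeasure μ₂]
    (h₁ : ∀ᵐ x ∂μ₁, x ∈ S) (h₂ : ∀ᵐ x ∂μ₂, x ∈ S) (h₃ : ∀ᵐ x ∂μ₃, x ∈ S) :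
    Wp d p μ₁ μ₃ ≤ Wp d p μ₁ μ₂ + Wp d p μ₂ μ₃ := by
  have hp0 : 0 < p := zero_lt_one.trans_le hp
  set cost : X × X → ℝ := fun q => p ^ (-(1 / p)) * d q.1 q.2 with hcost_def
  have hcost : Measurable cost := measurable_const.mul hd_meas
  rw [Wp_eq_iInf_eLpNorm hp0 hd (μ := μ₁) (ν := μ₂), Wp_eq_iInf_eLpNorm hp0 hd (μ := μ₂)]
  refine ENNReal.le_iInf_add_iInf fun ⟨γ₁, hγ₁⟩ ⟨γ₂, hγ₂⟩ => ?_
  have := hγ₁.isFiniteMeasure_of_snd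
  have := hγ₂.isFiniteMeasure_of_fst
  obtain ⟨ρ, hρ₁, hρ₂⟩ := exists_gluing γ₁ γ₂ (hγ₁.2.trans hγ₂.1.symm)
  have hg : Measurable fun q : (X × X) × X => (q.1.2, q.2) :=
    (measurable_snd.comp measurable_fst).prodMk measurable_snd
  have hπ : Measurable fun q : (X × X) × X => (q.1.1, q.2) :=
    (measurable_fst.comp measurable_fst).prodMk measurable_snd
  have hρ : IsCoupling (ρ.map fun q => (q.1.1, q.2)) μ₁ μ₃ := by
    constructor
    · rw [Measure.map_map measurable_fst hπ, ← hγ₁.1, ← hρ₁,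
        Measure.map_map measurable_fst measurable_fst]
      rfl
    · rw [Measure.map_map measurable_snd hπ, ← hγ₂.2, ← hρ₂, Measure.map_map measurable_snd hg]
      rfl
  have hS₁ : ∀ᵐ q ∂ρ, q.1.1 ∈ S :=
    ae_of_ae_map measurable_fst.aemeasurable (hρ₁ ▸ hγ₁.ae_fst h₁)
  have hS₂ : ∀ᵐ q ∂ρ, q.1.2 ∈ S :=
    ae_of_ae_map measurable_fst.aemeasurable (hρ₁ ▸ hγ₁.ae_snd h₂)
  have hS₃ : ∀ᵐ q ∂ρ, q.2 ∈ S :=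
    ae_of_ae_map hg.aemeasurable (hρ₂ ▸ hγ₂.ae_snd h₃)
  calc Wp d p μ₁ μ₃
      ≤ eLpNorm cost (ENNReal.ofReal p) (ρ.map fun q => (q.1.1, q.2)) :=
        Wp_le_of_isCoupling hp0 hd hρ
    _ = eLpNorm (fun q => cost (q.1.1, q.2)) (ENNReal.ofReal p) ρ :=
        eLpNorm_map_measure hcost.aestronglyMeasurable hπ.aemeasurable
    _ ≤ eLpNorm (fun q => cost q.1 + cost (q.1.2, q.2)) (ENNReal.ofReal p) ρ := by
        refine eLpNorm_mono_ae_real ?_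
        filter_upwards [hS₁, hS₂, hS₃] with q hq₁ hq₂ hq₃
        have hc : 0 ≤ p ^ (-(1 / p)) := by positivity
        simp only [hcost_def, Real.norm_eq_abs, abs_of_nonneg (mul_nonneg hc (hd _ _))]
        nlinarith [htri _ hq₁ _ hq₂ _ hq₃]
    _ ≤ eLpNorm (fun q => cost q.1) (ENNReal.ofReal p) ρ
          + eLpNorm (fun q => cost (q.1.2, q.2)) (ENNReal.ofReal p) ρ :=
        eLpNorm_add_le (hcost.comp measurable_fst).aestronglyMeasurable
          (hcost.comp hg).aestronglyMeasurable (by simpa using hp)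
    _ = eLpNorm cost (ENNReal.ofReal p) γ₁ + eLpNorm cost (ENNReal.ofReal p) γ₂ := by
        rw [← hρ₁, ← hρ₂, eLpNorm_map_measure hcost.aestronglyMeasurable hg.aemeasurable,
          eLpNorm_map_measure hcost.aestronglyMeasurable measurable_fst.aemeasurable]
        rfl

end Wasserstein

local notation "W∠" => Wp (fun x y => Real.arccos ⟪x, y⟫)

section Sphere

variable {E : Type*} [NormedAddCommGroup E] [InnerProductSpace ℝ E] {x y z : E}

theorem arccos_inner_le_add_of_norm_eq_one (hx : ‖x‖ = 1) (hy : ‖y‖ = 1) (hz : ‖z‖ = 1) :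
    Real.arccos ⟪x, z⟫ ≤ Real.arccos ⟪x, y⟫ + Real.arccos ⟪y, z⟫ := by
  simpa [InnerProductGeometry.angle, hx, hy, hz] using
    InnerProductGeometry.angle_le_angle_add_angle x y z

theorem arccos_inner_le_of_dist_le (hx : ‖x‖ = 1) (hy : ‖y‖ = 1) {s : ℝ} (hs : dist x y ≤ s) :
    Real.arccos ⟪x, y⟫ ≤ Real.arccos (1 - s ^ 2 / 2) := by
  have hxy : ⟪x, y⟫ = 1 - dist x y ^ 2 / 2 := by
    rw [dist_eq_norm, @norm_sub_sq_real, hx, hy]; ring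
  refine Real.arccos_le_arccos ?_
  rw [hxy]
  nlinarith [dist_nonneg (x := x) (y := y)]

variable [MeasurableSpace E] [BorelSpace E] [SecondCountableTopology E] {p : ℝ}

theorem measurable_arccos_inner :
    Measurable (Function.uncurry fun x y : E => Real.arccos ⟪x, y⟫) :=
  (Real.continuous_arccos.comp continuous_inner).measurable

theorem Wp_arccos_le_add_add [CompleteSpace E] (hp : 1 ≤ p) {S : Set E}
    (hS : S ⊆ Metric.sphere 0 1) {μ₁ μ₂ μ₃ μ₄ : Measure E} [IsFiniteMeasure μ₂]
    [IsFiniteMeasure μ₃] (h₁ : ∀ᵐ x ∂μ₁, x ∈ S) (h₂ : ∀ᵐ x ∂μ₂, x ∈ S)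
    (h₃ : ∀ᵐ x ∂μ₃, x ∈ S) (h₄ : ∀ᵐ x ∂μ₄, x ∈ S) :
    W∠ p μ₁ μ₄ ≤ W∠ p μ₁ μ₂ + W∠ p μ₂ μ₃ + W∠ p μ₃ μ₄ := by
  have htri : ∀ x ∈ S, ∀ y ∈ S, ∀ z ∈ S,
      Real.arccos ⟪x, z⟫ ≤ Real.arccos ⟪x, y⟫ + Real.arccos ⟪y, z⟫ := fun x hx y hy z hz =>
    arccos_inner_le_add_of_norm_eq_one (mem_sphere_zero_iff_norm.1 (hS hx))
      (mem_sphere_zero_iff_norm.1 (hS hy)) (mem_sphere_zero_iff_norm.1 (hS hz))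
  have hd : ∀ x y : E, 0 ≤ Real.arccos ⟪x, y⟫ := fun _ _ => Real.arccos_nonneg _
  rw [add_assoc]
  refine (Wp_le_add hp hd measurable_arccos_inner htri h₁ h₂ h₄).trans ?_
  gcongr
  exact Wp_le_add hp hd measurable_arccos_inner htri h₂ h₃ h₄

theorem Wp_arccos_map_le_of_dist_le {Z : Type*} [MeasurableSpace Z] {μ : Measure Z}
    (hp : 0 < p) {f g : Z → E} (hf : Measurable f) (hg : Measurable g)
    (hf₁ : ∀ᵐ z ∂μ, f z ∈ Metric.sphere 0 1) (hg₁ : ∀ᵐ z ∂μ, g z ∈ Metric.sphere 0 1) {s : ℝ}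
    (hs : ∀ᵐ z ∂μ, dist (f z) (g z) ≤ s) {M : ℝ} (hM : 0 ≤ M)
    (hμ : μ Set.univ = ENNReal.ofReal M) :
    W∠ p (μ.map f) (μ.map g)
      ≤ ENNReal.ofReal (M ^ (1 / p) * p ^ (-(1 / p)) * Real.arccos (1 - s ^ 2 / 2)) := by
  refine Wp_map_le_of_ae_le hp (fun _ _ => Real.arccos_nonneg _) measurable_arccos_inner hf hg
    ?_ hM hμ
  filter_upwards [hf₁, hg₁, hs] with z hfz hgz hz
  exact arccos_inner_le_of_dist_le (mem_sphere_zero_iff_norm.1 hfz)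
    (mem_sphere_zero_iff_norm.1 hgz) hz

theorem Wp_arccos_map_map_le_of_lipschitzOn {μ : Measure E} [IsFiniteMeasure μ] (hp : 0 < p)
    {S : Set E} (hS : MeasurableSet S) (hS₁ : S ⊆ Metric.sphere 0 1) (hμS : ∀ᵐ x ∂μ, x ∈ S)
    {F T : E → E} (hF : Measurable F) (hT : Measurable T) (hFS : Set.MapsTo F S S) {r : ℝ}
    (hFr : ∀ x ∈ S, dist x (F x) ≤ r) {L : ℝ}
    (hTL : ∀ x ∈ S, ∀ y ∈ S, Real.arccos ⟪T x, T y⟫ ≤ L * Real.arccos ⟪x, y⟫) {M : ℝ}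
    (hM : 0 ≤ M) (hμ : μ Set.univ = ENNReal.ofReal M) :
    W∠ p (μ.map T) ((μ.map F).map T) ≤ ENNReal.ofReal L *
      ENNReal.ofReal (M ^ (1 / p) * p ^ (-(1 / p)) * Real.arccos (1 - r ^ 2 / 2)) := by
  refine (Wp_map_le_of_lipschitzOn hp (fun _ _ => Real.arccos_nonneg _)
    (fun _ _ => Real.arccos_nonneg _) measurable_arccos_inner hT hTL
    (by simp [Measure.map_apply hF .univ]) hμS (ae_mem_map_of_mapsTo hF hS hμS hFS)).trans ?_
  gcongr
  simpa using Wp_arccos_map_le_of_dist_le hp measurable_id hF (hμS.mono fun x hx => hS₁ hx)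
    (hμS.mono fun x hx => hS₁ (hFS hx)) (hμS.mono hFr) hM hμ

theorem Wp_arccos_map_map_le_of_lipschitzOn_of_dist_le {Y : Type*} [PseudoMetricSpace Y]
    [MeasurableSpace Y] {μ : Measure Y} (hp : 0 < p) {Ω : Set Y} (hμΩ : ∀ᵐ z ∂μ, z ∈ Ω)
    {G : Y → Y} {Φ : Y → E} (hG : Measurable G) (hΦ : Measurable Φ) (hGΩ : Set.MapsTo G Ω Ω)
    {l : ℝ} (hGl : ∀ z ∈ Ω, dist z (G z) ≤ l) (hΦΩ : Set.MapsTo Φ Ω (Metric.sphere 0 1))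
    {C : ℝ} (hC : 0 ≤ C) (hΦC : ∀ z ∈ Ω, ∀ z' ∈ Ω, dist (Φ z) (Φ z') ≤ C * dist z z') {M : ℝ}
    (hM : 0 ≤ M) (hμ : μ Set.univ = ENNReal.ofReal M) :
    W∠ p ((μ.map G).map Φ) (μ.map Φ)
      ≤ ENNReal.ofReal (M ^ (1 / p) * p ^ (-(1 / p)) * Real.arccos (1 - (C * l) ^ 2 / 2)) := by
  rw [Measure.map_map hΦ hG]
  refine Wp_arccos_map_le_of_dist_le hp (hΦ.comp hG) hΦ (hμΩ.mono fun z hz => hΦΩ (hGΩ hz))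
    (hμΩ.mono fun z hz => hΦΩ hz) (hμΩ.mono fun z hz => ?_) hM hμ
  calc dist (Φ (G z)) (Φ z) ≤ C * dist (G z) z := hΦC _ (hGΩ hz) z hz
    _ ≤ C * l := mul_le_mul_of_nonneg_left (dist_comm z (G z) ▸ hGl z hz) hC

end Sphere

theorem stmt_17_general {n : ℕ} (p : ℝ) (hp : 1 ≤ p)
    (ΩI ΩO : Set (EuclideanSpace ℝ (Fin (n + 1))))
    (hΩIc : IsCompact ΩI)
    (hΩOc : IsCompact ΩO)
    (hΩIs : ΩI ⊆ Metric.sphere (0 : EuclideanSpace ℝ (Fin (n + 1))) 1)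
    (hΩOs : ΩO ⊆ Metric.sphere (0 : EuclideanSpace ℝ (Fin (n + 1))) 1)
    (M : ℝ) (hM : 0 ≤ M)
    -- the source measure μ_I on Ω_I of total mass M, discretized by a Borel
    -- nearest-point map F onto points xs of covering radius r ≤ 2
    (μI : Measure (EuclideanSpace ℝ (Fin (n + 1))))
    (hμIsupp : μI ΩIᶜ = 0) (hμImass : μI Set.univ = ENNReal.ofReal M)
    (N : ℕ) (xs : Fin N → EuclideanSpace ℝ (Fin (n + 1))) (hxs : ∀ j, xs j ∈ ΩI)
    (r : ℝ)
    (F : EuclideanSpace ℝ (Fin (n + 1)) → EuclideanSpace ℝ (Fin (n + 1)))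
    (hFmeas : Measurable F)
    (hFrange : ∀ x ∈ ΩI, F x ∈ Set.range xs)
    (hFr : ∀ x ∈ ΩI, dist x (F x) ≤ r)
    -- the target measure μ_t on Ω of total mass M, discretized by a Borel
    -- nearest-point map G onto points zs of covering radius l
    (Ω : Set (EuclideanSpace ℝ (Fin n)))
    (μt : Measure (EuclideanSpace ℝ (Fin n)))
    (hμtsupp : μt Ωᶜ = 0) (hμtmass : μt Set.univ = ENNReal.ofReal M)
    (K : ℕ) (zs : Fin K → EuclideanSpace ℝ (Fin n)) (hzs : ∀ i, zs i ∈ Ω)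
    (l : ℝ)
    (G : EuclideanSpace ℝ (Fin n) → EuclideanSpace ℝ (Fin n))
    (hGmeas : Measurable G)
    (hGrange : ∀ z ∈ Ω, G z ∈ Set.range zs)
    (hGl : ∀ z ∈ Ω, dist z (G z) ≤ l)
    -- the homeomorphism Q : Ω_O → Ω, Lipschitz with constant L_Q from the geodesic
    -- distance, whose inverse is C₁-Lipschitz in the Euclidean distances, C₁ l ≤ 2
    (Q : EuclideanSpace ℝ (Fin (n + 1)) → EuclideanSpace ℝ (Fin n))
    (Qinv : EuclideanSpace ℝ (Fin n) → EuclideanSpace ℝ (Fin (n + 1)))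
    (hQmeas : Measurable Q) (hQinvmeas : Measurable Qinv)
    (hQinvmaps : Set.MapsTo Qinv Ω ΩO)
    (hQright : ∀ z ∈ Ω, Q (Qinv z) = z)
    (LQ C₁ : ℝ) (hLQ0 : 0 ≤ LQ) (hC₁0 : 0 ≤ C₁)
    (hQLip : ∀ y ∈ ΩO, ∀ y' ∈ ΩO, dist (Q y) (Q y') ≤ LQ * Real.arccos ⟪y, y'⟫)
    (hQinvLip : ∀ z ∈ Ω, ∀ z' ∈ Ω, dist (Qinv z) (Qinv z') ≤ C₁ * dist z z')
    -- the reflecting map T̃ : Ω_I → Ω_O, Lipschitz with constant L_T for the geodesic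
    -- distances, with W_p(T̃♯μ_I^N, μ_O^K) ≤ δ
    (T : EuclideanSpace ℝ (Fin (n + 1)) → EuclideanSpace ℝ (Fin (n + 1)))
    (hTmeas : Measurable T) (hTmaps : Set.MapsTo T ΩI ΩO)
    (LT : ℝ) (hLT0 : 0 ≤ LT)
    (hTLip : ∀ x ∈ ΩI, ∀ x' ∈ ΩI,
      Real.arccos ⟪T x, T x'⟫ ≤ LT * Real.arccos ⟪x, x'⟫)
    (δ : ℝ) (hδ0 : 0 ≤ δ)
    (hδ : Wp (fun x y => Real.arccos ⟪x, y⟫) p ((μI.map F).map T) ((μt.map G).map Qinv)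
      ≤ ENNReal.ofReal δ) :
    Wp dist p ((μI.map T).map Q) μt
      ≤ ENNReal.ofReal (LQ *
          (LT * (M ^ (1 / p) * p ^ (-(1 / p)) * Real.arccos (1 - r ^ 2 / 2))
            + δ
            + M ^ (1 / p) * p ^ (-(1 / p)) * Real.arccos (1 - (C₁ * l) ^ 2 / 2))) := by
  have hp0 : 0 < p := zero_lt_one.trans_le hp
  have : IsFiniteMeasure μI := ⟨hμImass ▸ ENNReal.ofReal_lt_top⟩
  have : IsFiniteMeasure μt := ⟨hμtmass ▸ ENNReal.ofReal_lt_top⟩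
  have hI : ∀ᵐ x ∂μI, x ∈ ΩI := mem_ae_iff.2 hμIsupp
  have ht : ∀ᵐ z ∂μt, z ∈ Ω := mem_ae_iff.2 hμtsupp
  have hΩI : MeasurableSet ΩI := hΩIc.isClosed.measurableSet
  have hΩO : MeasurableSet ΩO := hΩOc.isClosed.measurableSet
  have hFmaps : Set.MapsTo F ΩI ΩI := fun x hx => (hFrange x hx).choose_spec ▸ hxs _
  have hGmaps : Set.MapsTo G Ω Ω := fun z hz => (hGrange z hz).choose_spec ▸ hzs _
  have hT := ae_mem_map_of_mapsTo hTmeas hΩO hI hTmaps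
  have hTF := ae_mem_map_of_mapsTo hTmeas hΩO (ae_mem_map_of_mapsTo hFmeas hΩI hI hFmaps) hTmaps
  have hQinv := ae_mem_map_of_mapsTo hQinvmeas hΩO ht hQinvmaps
  have hQinvG : ∀ᵐ y ∂(μt.map G).map Qinv, y ∈ ΩO := by
    rw [Measure.map_map hQinvmeas hGmeas]
    exact ae_mem_map_of_mapsTo (hQinvmeas.comp hGmeas) hΩO ht (hQinvmaps.comp hGmaps)
  calc Wp dist p ((μI.map T).map Q) μt
      = Wp dist p ((μI.map T).map Q) ((μt.map Qinv).map Q) := by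
        rw [map_map_eq_self_of_ae_leftInverse hQinvmeas hQmeas (ht.mono hQright)]
    _ ≤ ENNReal.ofReal LQ * W∠ p (μI.map T) (μt.map Qinv) :=
        Wp_map_le_of_lipschitzOn hp0 (fun _ _ => Real.arccos_nonneg _) (fun _ _ => dist_nonneg)
          continuous_dist.measurable hQmeas hQLip
          (by simp [Measure.map_apply hTmeas .univ, Measure.map_apply hQinvmeas .univ, hμImass,
            hμtmass]) hT hQinv
    _ ≤ ENNReal.ofReal LQ * (W∠ p (μI.map T) ((μI.map F).map T)
          + W∠ p ((μI.map F).map T) ((μt.map G).map Qinv)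
          + W∠ p ((μt.map G).map Qinv) (μt.map Qinv)) := by
        gcongr
        exact Wp_arccos_le_add_add hp hΩOs hT hTF hQinvG hQinv
    _ ≤ ENNReal.ofReal LQ * (ENNReal.ofReal LT *
          ENNReal.ofReal (M ^ (1 / p) * p ^ (-(1 / p)) * Real.arccos (1 - r ^ 2 / 2))
          + ENNReal.ofReal δ
          + ENNReal.ofReal (M ^ (1 / p) * p ^ (-(1 / p)) *
            Real.arccos (1 - (C₁ * l) ^ 2 / 2))) := by
        grw [Wp_arccos_map_map_le_of_lipschitzOn hp0 hΩI hΩIs hI hFmeas hTmeas hFmaps hFr hTLip hM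
            hμImass, hδ, Wp_arccos_map_map_le_of_lipschitzOn_of_dist_le hp0 ht hGmeas hQinvmeas
            hGmaps hGl (hQinvmaps.mono_right hΩOs) hC₁0 hQinvLip hM hμtmass]
    _ = _ := by
        have hr := Real.arccos_nonneg (1 - r ^ 2 / 2)
        have hl := Real.arccos_nonneg (1 - (C₁ * l) ^ 2 / 2)
        rw [← ENNReal.ofReal_mul hLT0, ← ENNReal.ofReal_add (by positivity) hδ0,
          ← ENNReal.ofReal_add (by positivity) (by positivity), ← ENNReal.ofReal_mul hLQ0]

/-- full error estimate between the projection `(Q ∘ T̃)♯μ_I` of the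
numerical geometric optics approximation measure onto the target domain and the target
measure `μ_t`, in the Wasserstein metric of order `p`. -/
theorem stmt_17 {n : ℕ} (hn : 1 ≤ n) (p : ℝ) (hp : 1 ≤ p)
    (ΩI ΩO : Set (EuclideanSpace ℝ (Fin (n + 1))))
    (hΩIne : ΩI.Nonempty) (hΩIc : IsCompact ΩI)
    (hΩOne : ΩO.Nonempty) (hΩOc : IsCompact ΩO)
    (hΩIs : ΩI ⊆ Metric.sphere (0 : EuclideanSpace ℝ (Fin (n + 1))) 1)
    (hΩOs : ΩO ⊆ Metric.sphere (0 : EuclideanSpace ℝ (Fin (n + 1))) 1)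
    (M : ℝ) (hM : 0 ≤ M)
    -- the source measure μ_I on Ω_I of total mass M, discretized by a Borel
    -- nearest-point map F onto points xs of covering radius r ≤ 2
    (μI : Measure (EuclideanSpace ℝ (Fin (n + 1))))
    (hμIsupp : μI ΩIᶜ = 0) (hμImass : μI Set.univ = ENNReal.ofReal M)
    (N : ℕ) (xs : Fin N → EuclideanSpace ℝ (Fin (n + 1))) (hxs : ∀ j, xs j ∈ ΩI)
    (r : ℝ) (hr0 : 0 ≤ r) (hr2 : r ≤ 2)
    (F : EuclideanSpace ℝ (Fin (n + 1)) → EuclideanSpace ℝ (Fin (n + 1)))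
    (hFmeas : Measurable F)
    (hFrange : ∀ x ∈ ΩI, F x ∈ Set.range xs)
    (hFnear : ∀ x ∈ ΩI, dist x (F x) = ⨅ j, dist x (xs j))
    (hFr : ∀ x ∈ ΩI, dist x (F x) ≤ r)
    -- the target measure μ_t on Ω of total mass M, discretized by a Borel
    -- nearest-point map G onto points zs of covering radius l
    (Ω : Set (EuclideanSpace ℝ (Fin n))) (hΩne : Ω.Nonempty) (hΩc : IsCompact Ω)
    (μt : Measure (EuclideanSpace ℝ (Fin n)))
    (hμtsupp : μt Ωᶜ = 0) (hμtmass : μt Set.univ = ENNReal.ofReal M)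
    (K : ℕ) (zs : Fin K → EuclideanSpace ℝ (Fin n)) (hzs : ∀ i, zs i ∈ Ω)
    (l : ℝ) (hl0 : 0 ≤ l)
    (G : EuclideanSpace ℝ (Fin n) → EuclideanSpace ℝ (Fin n))
    (hGmeas : Measurable G)
    (hGrange : ∀ z ∈ Ω, G z ∈ Set.range zs)
    (hGnear : ∀ z ∈ Ω, dist z (G z) = ⨅ i, dist z (zs i))
    (hGl : ∀ z ∈ Ω, dist z (G z) ≤ l)
    -- the homeomorphism Q : Ω_O → Ω, Lipschitz with constant L_Q from the geodesic
    -- distance, whose inverse is C₁-Lipschitz in the Euclidean distances, C₁ l ≤ 2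
    (Q : EuclideanSpace ℝ (Fin (n + 1)) → EuclideanSpace ℝ (Fin n))
    (Qinv : EuclideanSpace ℝ (Fin n) → EuclideanSpace ℝ (Fin (n + 1)))
    (hQmeas : Measurable Q) (hQinvmeas : Measurable Qinv)
    (hQmaps : Set.MapsTo Q ΩO Ω) (hQinvmaps : Set.MapsTo Qinv Ω ΩO)
    (hQc : ContinuousOn Q ΩO) (hQinvc : ContinuousOn Qinv Ω)
    (hQleft : ∀ y ∈ ΩO, Qinv (Q y) = y) (hQright : ∀ z ∈ Ω, Q (Qinv z) = z)
    (LQ C₁ : ℝ) (hLQ0 : 0 ≤ LQ) (hC₁0 : 0 ≤ C₁)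
    (hQLip : ∀ y ∈ ΩO, ∀ y' ∈ ΩO, dist (Q y) (Q y') ≤ LQ * Real.arccos ⟪y, y'⟫)
    (hQinvLip : ∀ z ∈ Ω, ∀ z' ∈ Ω, dist (Qinv z) (Qinv z') ≤ C₁ * dist z z')
    (hCl : C₁ * l ≤ 2)
    -- the reflecting map T̃ : Ω_I → Ω_O, Lipschitz with constant L_T for the geodesic
    -- distances, with W_p(T̃♯μ_I^N, μ_O^K) ≤ δ
    (T : EuclideanSpace ℝ (Fin (n + 1)) → EuclideanSpace ℝ (Fin (n + 1)))
    (hTmeas : Measurable T) (hTmaps : Set.MapsTo T ΩI ΩO)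
    (LT : ℝ) (hLT0 : 0 ≤ LT)
    (hTLip : ∀ x ∈ ΩI, ∀ x' ∈ ΩI,
      Real.arccos ⟪T x, T x'⟫ ≤ LT * Real.arccos ⟪x, x'⟫)
    (δ : ℝ) (hδ0 : 0 ≤ δ)
    (hδ : Wp (fun x y => Real.arccos ⟪x, y⟫) p ((μI.map F).map T) ((μt.map G).map Qinv)
      ≤ ENNReal.ofReal δ) :
    Wp dist p ((μI.map T).map Q) μt
      ≤ ENNReal.ofReal (LQ *
          (LT * (M ^ (1 / p) * p ^ (-(1 / p)) * Real.arccos (1 - r ^ 2 / 2))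
            + δ
            + M ^ (1 / p) * p ^ (-(1 / p)) * Real.arccos (1 - (C₁ * l) ^ 2 / 2))) :=
  stmt_17_general p hp ΩI ΩO hΩIc hΩOc hΩIs hΩOs M hM μI hμIsupp hμImass N xs hxs r F hFmeas hFrange
    hFr Ω μt hμtsupp hμtmass K zs hzs l G hGmeas hGrange hGl Q Qinv hQmeas hQinvmeas hQinvmaps
    hQright LQ C₁ hLQ0 hC₁0 hQLip hQinvLip T hTmeas hTmaps LT hLT0 hTLip δ hδ0 hδ
end
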